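/- With 𝓛 the Hedlund family of lines, the closed 1/100-neighborhoods of any two distinct lines of 𝓛 are at distance at least 1/5 from each other. -/

import Mathlib

/-!
Each line of the family is parallel to a coordinate axis and its two fixed coordinates lie in
`ℤ ∪ (ℤ + 1/4)`. Any two distinct lines are fixed in a common coordinate `c` to different values:
for translates of the same line because they differ in some fixed coordinate, and for lines of
different directions because the common fixed coordinate is integral on one of them and in
`ℤ + 1/4` on the other. Distinct values of `ℤ ∪ (ℤ + 1/4)` are at least `1/4` apart, and the
`c`-th coordinate is `1`-Lipschitz, so the neighbourhoods are at distance at least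
`1/4 - 2/100 ≥ 1/5`.
-/

noncomputable section

def ell1 : Set (EuclideanSpace ℝ (Fin 3)) := {x | x 1 = 0 ∧ x 2 = 0}
def ell2 : Set (EuclideanSpace ℝ (Fin 3)) := {x | x 0 = 0 ∧ x 2 = 1 / 4}
def ell3 : Set (EuclideanSpace ℝ (Fin 3)) := {x | x 0 = 1 / 4 ∧ x 1 = 1 / 4}

/-- The Hedlund family of lines: all `ℤ³`-translates of `ℓ₁, ℓ₂, ℓ₃`. -/
def hedlund : Set (Set (EuclideanSpace ℝ (Fin 3))) :=
  {S | ∃ k : Fin 3 → ℤ,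
    S = (fun x => x + (WithLp.toLp 2 (fun j => (k j : ℝ)) : EuclideanSpace ℝ (Fin 3))) '' ell1 ∨
    S = (fun x => x + (WithLp.toLp 2 (fun j => (k j : ℝ)) : EuclideanSpace ℝ (Fin 3))) '' ell2 ∨
    S = (fun x => x + (WithLp.toLp 2 (fun j => (k j : ℝ)) : EuclideanSpace ℝ (Fin 3))) '' ell3}

open Metric

section AxisLine

variable {ι : Type*}

def axisLine (t : ι) (v : ι → ℝ) : Set (EuclideanSpace ℝ ι) :=
  {x | ∀ c, c ≠ t → x c = v c}

theorem axisLine_nonempty (t : ι) (v : ι → ℝ) : (axisLine t v).Nonempty :=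
  ⟨WithLp.toLp 2 v, fun _ _ => rfl⟩

theorem exists_ne_of_axisLine_ne {t : ι} {v w : ι → ℝ} (h : axisLine t v ≠ axisLine t w) :
    ∃ c, c ≠ t ∧ v c ≠ w c := by
  contrapose! h
  ext x
  exact forall₂_congr fun c hc => by rw [h c hc]

theorem abs_sub_le_infDist_axisLine [Fintype ι] {t c : ι} (hc : c ≠ t) (v : ι → ℝ)
    (x : EuclideanSpace ℝ ι) : |x c - v c| ≤ infDist x (axisLine t v) :=
  (le_infDist (axisLine_nonempty t v)).2 fun p hp => hp c hc ▸ PiLp.dist_apply_le x p c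

end AxisLine

theorem quarter_le_abs_sub {n m e f : ℤ} (he : e ∈ Set.Icc 0 1) (hf : f ∈ Set.Icc 0 1)
    (h : n ≠ m ∨ e ≠ f) : (1 / 4 : ℝ) ≤ |(n + e / 4 : ℝ) - (m + f / 4)| := by
  obtain ⟨he0, he1⟩ := he
  obtain ⟨hf0, hf1⟩ := hf
  have hz : 4 * n + e - (4 * m + f) ≠ 0 := by omega
  have hz' : (1 : ℝ) ≤ |((4 * n + e - (4 * m + f) : ℤ) : ℝ)| := by
    exact_mod_cast Int.one_le_abs hz
  have hdiv : (n + e / 4 : ℝ) - (m + f / 4) = ((4 * n + e - (4 * m + f) : ℤ) : ℝ) / 4 := by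
    push_cast; ring
  rw [hdiv, abs_div, abs_of_pos (by norm_num : (0 : ℝ) < 4)]
  linarith

/-- The translate of `ℓ_{t+1}` by `k ∈ ℤ³` is the line along the axis `t` whose other coordinates
`c` are fixed to `k c + hedlundOffset t c / 4`; the diagonal entries play no role. -/
def hedlundOffset : Fin 3 → Fin 3 → ℤ := ![![0, 0, 0], ![0, 0, 1], ![1, 1, 0]]

theorem hedlundOffset_mem_Icc : ∀ t c, hedlundOffset t c ∈ Set.Icc 0 1 := by
  decide

theorem exists_hedlundOffset_ne {t t' : Fin 3} (h : t ≠ t') :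
    ∃ c, c ≠ t ∧ c ≠ t' ∧ hedlundOffset t c ≠ hedlundOffset t' c := by
  revert t t'; decide

def hedlundLevel (t : Fin 3) (k : Fin 3 → ℤ) (c : Fin 3) : ℝ := k c + hedlundOffset t c / 4

def hedlundLine (t : Fin 3) (k : Fin 3 → ℤ) : Set (EuclideanSpace ℝ (Fin 3)) :=
  axisLine t (hedlundLevel t k)

theorem exists_eq_hedlundLine {S : Set (EuclideanSpace ℝ (Fin 3))} (hS : S ∈ hedlund) :
    ∃ t k, S = hedlundLine t k := by
  obtain ⟨k, rfl | rfl | rfl⟩ := hS <;>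
    [refine ⟨0, k, ?_⟩; refine ⟨1, k, ?_⟩; refine ⟨2, k, ?_⟩] <;>
    ext x <;>
    simp [Set.image_add_right, hedlundLine, hedlundLevel, axisLine, ell1, ell2, ell3,
      Fin.forall_fin_succ, hedlundOffset, add_neg_eq_iff_eq_add, add_comm _ (4⁻¹ : ℝ)]

theorem exists_quarter_le_of_hedlundLine_ne {t t' : Fin 3} {k k' : Fin 3 → ℤ}
    (h : hedlundLine t k ≠ hedlundLine t' k') :
    ∃ c, c ≠ t ∧ c ≠ t' ∧ (1 / 4 : ℝ) ≤ |hedlundLevel t k c - hedlundLevel t' k' c| := by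
  have hsep (c : Fin 3) (hc : k c ≠ k' c ∨ hedlundOffset t c ≠ hedlundOffset t' c) :=
    quarter_le_abs_sub (hedlundOffset_mem_Icc t c) (hedlundOffset_mem_Icc t' c) hc
  by_cases htt : t = t'
  · subst htt
    obtain ⟨c, hc, hne⟩ := exists_ne_of_axisLine_ne h
    exact ⟨c, hc, hc, hsep c (.inl fun hk => hne (by simp [hedlundLevel, hk]))⟩
  · obtain ⟨c, hc, hc', hne⟩ := exists_hedlundOffset_ne htt
    exact ⟨c, hc, hc', hsep c (.inr hne)⟩

theorem stmt_6 (S T : Set (EuclideanSpace ℝ (Fin 3)))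
    (hS : S ∈ hedlund) (hT : T ∈ hedlund) (hne : S ≠ T) :
    ∀ x y : EuclideanSpace ℝ (Fin 3),
      Metric.infDist x S ≤ 1 / 100 → Metric.infDist y T ≤ 1 / 100 →
        (1 / 5 : ℝ) ≤ dist x y := by
  intro x y hx hy
  obtain ⟨t, k, rfl⟩ := exists_eq_hedlundLine hS
  obtain ⟨t', k', rfl⟩ := exists_eq_hedlundLine hT
  obtain ⟨c, hc, hc', hsep⟩ := exists_quarter_le_of_hedlundLine_ne hne
  set a := hedlundLevel t k c
  set b := hedlundLevel t' k' c
  have hxa : |x c - a| ≤ 1 / 100 := (abs_sub_le_infDist_axisLine hc _ x).trans hx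
  have hyb : |y c - b| ≤ 1 / 100 := (abs_sub_le_infDist_axisLine hc' _ y).trans hy
  have hxy : |x c - y c| ≤ dist x y := PiLp.dist_apply_le x y c
  have hab : |a - b| ≤ |x c - a| + |x c - b| := abs_sub_comm a (x c) ▸ abs_sub_le a (x c) b
  have hxb : |x c - b| ≤ |x c - y c| + |y c - b| := abs_sub_le (x c) (y c) b
  linarith
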